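/- arXiv:2110.03068 — 2 statements merged into one kernel-verified Lean document; each statement's English description precedes it below -/
import Mathlib

section
/- Let f(t) = max_{i ∈ [K]} μ̂_{i,t} be the highest empirical mean maintained by the user at time t. Then for any round r of Algorithm 1 (Phase-1 Sweeping), denoted by the time interval [t_s^{(r)}, t_e^{(r)}] (a round starts with candidate set F = {1,…,K} and ends when every arm has been rejected once within the round), one has f(t_e^{(r)}) ≤ f(t_s^{(r)}) − 2·√( Γ̲^{(r)} / n(t_e^{(r)}) ), where Γ̲^{(r)} = min_{t ∈ [t_s^{(r)}, t_e^{(r)}]} Γ(t). -/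
/-!
Write `δ = √(Γ̲/n(te))`. During the round `Γ(t) ≥ Γ̲` and `n_i^t ≤ n(te)`, so every confidence
width is at least `δ`, and an arm `i` rejected at time `t` in favour of `j` has
`μ̂_{i,t} + 2δ ≤ μ̂_{j,t}`. Arms are rejected in the order `0, …, K-1` and are not recommended
again within the round, so each empirical mean is frozen from the arm's rejection time until `te`.
By strong induction on `i`, the mean of arm `i` at its rejection is at most `f(ts) - 2δ`: the
witness `j` is either a later arm, still at its value at `ts`, or an earlier one, already frozen
below `f(ts) - 2δ`.
-/

open MeasureTheory ProbabilityTheory Finset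

noncomputable section

/-- A trace of the sequential interaction between the recommender system and the
user: at each time `t` (and in each sample point `ω`) the system recommends the
arm `arm t ω`, the user accepts it iff `acc t ω = true`; `n i t ω` is the number
of acceptances of arm `i` before time `t`, `emp i t ω` is the user's empirical
mean of the rewards of arm `i` collected before time `t`, and `rho t ω` is the
user's (possibly history-dependent) confidence parameter `ρ_t`. -/
structure Trace (K : ℕ) (Ω : Type*) where
  arm : ℕ → Ω → Fin K
  acc : ℕ → Ω → Bool
  n : Fin K → ℕ → Ω → ℕ
  emp : Fin K → ℕ → Ω → ℝ
  rho : ℕ → Ω → ℝ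

namespace Trace

variable {K : ℕ} {Ω : Type*} (T : Trace K Ω)

/-- `n(t)`: total number of accepted recommendations before time `t`. -/
def ntot (t : ℕ) (ω : Ω) : ℕ := ∑ i, T.n i t ω

/-- The user's confidence-width function `Γ(t) = max{0, 2α log(ρ_t · n(t))}`. -/
def gam (α : ℝ) (t : ℕ) (ω : Ω) : ℝ :=
  max 0 (2 * α * Real.log (T.rho t ω * (T.ntot t ω : ℝ)))

/-- Upper confidence bound `ucb_{i,t} = μ̂_{i,t} + √(Γ(t)/n_i^t)`. -/
def ucb (α : ℝ) (i : Fin K) (t : ℕ) (ω : Ω) : ℝ :=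
  T.emp i t ω + Real.sqrt (T.gam α t ω / (T.n i t ω : ℝ))

/-- Lower confidence bound `lcb_{i,t} = μ̂_{i,t} − √(Γ(t)/n_i^t)`. -/
def lcb (α : ℝ) (i : Fin K) (t : ℕ) (ω : Ω) : ℝ :=
  T.emp i t ω - Real.sqrt (T.gam α t ω / (T.n i t ω : ℝ))

/-- Number of rejected recommendations before time `t`. -/
def rejCount (t : ℕ) (ω : Ω) : ℕ :=
  ((Finset.range t).filter fun u => T.acc u ω = false).card

/-- The dynamics of the interaction: acceptance counts start at `0` and increase by
one exactly at accepted recommendations of the corresponding arm; the empirical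
mean of an arm is updated, using the reward stream `r` (where `r i k` is the reward
the user observes at the `(k+1)`-st acceptance of arm `i`), exactly at accepted
recommendations of that arm; the confidence parameter stays in `[ρ₀, ρ₁]`; and the
user follows the confidence-interval decision rule: a recommended arm is rejected
iff some other arm's lower confidence bound is at least the recommended arm's upper
confidence bound (an arm that was never accepted has an infinite confidence
interval, so it is never rejected and never causes a rejection). -/
def Dynamics (α ρ₀ ρ₁ : ℝ) (r : Fin K → ℕ → Ω → ℝ) : Prop :=
  (∀ i ω, T.n i 0 ω = 0) ∧
  (∀ i t ω, T.n i (t + 1) ω =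
      T.n i t ω + if T.arm t ω = i ∧ T.acc t ω = true then 1 else 0) ∧
  (∀ i t ω, T.emp i (t + 1) ω =
      if T.arm t ω = i ∧ T.acc t ω = true then
        ((T.n i t ω : ℝ) * T.emp i t ω + r i (T.n i t ω) ω) / ((T.n i t ω : ℝ) + 1)
      else T.emp i t ω) ∧
  (∀ t ω, T.rho t ω ∈ Set.Icc ρ₀ ρ₁) ∧
  (∀ t ω, T.acc t ω = false ↔
      ∃ j : Fin K, j ≠ T.arm t ω ∧ 0 < T.n j t ω ∧ 0 < T.n (T.arm t ω) t ω ∧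
        T.ucb α (T.arm t ω) t ω ≤ T.lcb α j t ω)

/-- The time interval `[ts, te]` is one round of Phase-1 Sweeping (Algorithm 1) in
the sample point `ω`: the arms `0, 1, …, K−1` are rejected successively, in order,
at times `rt 0 < rt 1 < ⋯ < rt (K−1) = te` in `[ts, te]`; every other
recommendation in the round is accepted; and at any time of the round the
recommended arm has not yet been rejected in the round while all lower-indexed arms
already have been (i.e. each arm is recommended repeatedly until it is rejected,
after which the system moves to the next arm). -/
def IsRound (ω : Ω) (ts te : ℕ) : Prop :=
  ∃ rt : Fin K → ℕ, StrictMono rt ∧ (∀ i, ts ≤ rt i) ∧ (∀ i, rt i ≤ te) ∧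
    (∃ i, rt i = te) ∧
    (∀ i, T.arm (rt i) ω = i ∧ T.acc (rt i) ω = false) ∧
    (∀ u, ts ≤ u → u ≤ te → (∀ i, u ≠ rt i) → T.acc u ω = true) ∧
    (∀ u, ts ≤ u → u ≤ te →
      u ≤ rt (T.arm u ω) ∧ ∀ j : Fin K, j < T.arm u ω → rt j < u)

/-- Description of a run of Phase-1 Sweeping (Algorithm 1) with acceptance budget
`N₁`: `t₀ ω` is the end of the initialization stage; the main loop performs `M ω`
completed rounds `[ts r, te r]` (each round starting right after the previous one
ends), the first of which starts after both the initialization stage and time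
`e^{1/(2α)}(K+1)/ρ₀`; `Tend ω` is the termination time of Phase-1, namely the
first time at which the total number of acceptances reaches `N₁`; every completed
round ends before termination; the number of rejections incurred before the first
indexed round is at most `max{K, e^{1/(2α)}·K/ρ₀}`; in the (possibly incomplete)
round in progress at termination each arm is rejected at most once; and the
algorithm collects at least `⌊t/(K+1)⌋` acceptances in its first `t` steps. -/
def Phase1 (α ρ₀ N₁ : ℝ) (t₀ M : Ω → ℕ) (ts te : ℕ → Ω → ℕ) (Tend : Ω → ℕ) : Prop :=
  (∀ ω, (t₀ ω : ℝ) ≤ (ts 0 ω : ℝ) ∧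
      Real.exp (1 / (2 * α)) * ((K : ℝ) + 1) / ρ₀ ≤ (ts 0 ω : ℝ)) ∧
  (∀ ω r, r < M ω → T.IsRound ω (ts r ω) (te r ω)) ∧
  (∀ ω r, ts (r + 1) ω = te r ω + 1) ∧
  (∀ ω r, r < M ω → te r ω < Tend ω) ∧
  (∀ ω, N₁ ≤ (T.ntot (Tend ω) ω : ℝ) ∧ ∀ u, u < Tend ω → (T.ntot u ω : ℝ) < N₁) ∧
  (∀ ω, (T.rejCount (ts 0 ω) ω : ℝ) ≤
      max (K : ℝ) (Real.exp (1 / (2 * α)) * (K : ℝ) / ρ₀)) ∧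
  (∀ ω (i : Fin K), ((Finset.Ico (ts (M ω) ω) (Tend ω)).filter
      fun u => T.arm u ω = i ∧ T.acc u ω = false).card ≤ 1) ∧
  (∀ ω t, t ≤ Tend ω → t / (K + 1) ≤ T.ntot t ω)

/-- Description of a run of Phase-2 Elimination (Algorithm 2) started at time
`T1`: the candidate set `F` starts as the full arm set; as long as more than one
candidate remains, the system recommends an arm with the minimum acceptance count
among all arms, and the recommended arm is removed from the candidate set iff it
is rejected; once a single candidate remains, the candidate set stays fixed. -/
def Phase2 (T1 : Ω → ℕ) (F : ℕ → Ω → Finset (Fin K)) : Prop :=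
  (∀ ω, F (T1 ω) ω = Finset.univ) ∧
  (∀ ω t, T1 ω ≤ t → 1 < (F t ω).card → ∀ j, T.n (T.arm t ω) t ω ≤ T.n j t ω) ∧
  (∀ ω t, T1 ω ≤ t → F (t + 1) ω =
      if 1 < (F t ω).card ∧ T.acc t ω = false then (F t ω).erase (T.arm t ω)
      else F t ω)

end Trace

/-- The reward model: `r i k` is the reward the user observes at the `(k+1)`-st
acceptance of arm `i`; all these rewards are measurable, mutually independent, and
each `r i k` is `1`-sub-Gaussian with mean `μ i` (and in particular has mean
`μ i`). -/
def RewardModel {K : ℕ} {Ω : Type*} [MeasurableSpace Ω] (P : Measure Ω)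
    (μ : Fin K → ℝ) (r : Fin K → ℕ → Ω → ℝ) : Prop :=
  (∀ i k, Measurable (r i k)) ∧
  iIndepFun (fun p : Fin K × ℕ => r p.1 p.2) P ∧
  (∀ i k, ∫ ω, r i k ω ∂P = μ i) ∧
  (∀ (i : Fin K) (k : ℕ) (l : ℝ),
    ∫ ω, Real.exp (l * (r i k ω - μ i)) ∂P ≤ Real.exp (l ^ 2 / 2))

namespace Trace

variable {K : ℕ} {Ω : Type*} (T : Trace K Ω)

lemma n_le_ntot (i : Fin K) (t : ℕ) (ω : Ω) : T.n i t ω ≤ T.ntot t ω :=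
  single_le_sum (f := fun j => T.n j t ω) (fun _ _ => Nat.zero_le _) (mem_univ i)

lemma gam_nonneg (α : ℝ) (t : ℕ) (ω : Ω) : 0 ≤ T.gam α t ω :=
  le_max_left _ _

variable {T} {α ρ₀ ρ₁ : ℝ} {r : Fin K → ℕ → Ω → ℝ} {ω : Ω}

namespace Dynamics

lemma n_monotone (hdyn : T.Dynamics α ρ₀ ρ₁ r) (i : Fin K) :
    Monotone fun t => T.n i t ω := by
  obtain ⟨-, hn_succ, -⟩ := hdyn
  exact monotone_nat_of_le_succ fun t => (hn_succ i t ω).symm ▸ Nat.le_add_right _ _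

lemma ntot_monotone (hdyn : T.Dynamics α ρ₀ ρ₁ r) : Monotone fun t => T.ntot t ω :=
  fun _ _ hst => sum_le_sum fun i _ => hdyn.n_monotone i hst

lemma emp_eq_of_forall_not_accepted (hdyn : T.Dynamics α ρ₀ ρ₁ r) {i : Fin K} {a b : ℕ}
    (hab : a ≤ b) (hnot : ∀ v, a ≤ v → v < b → ¬(T.arm v ω = i ∧ T.acc v ω = true)) :
    T.emp i b ω = T.emp i a ω := by
  obtain ⟨-, -, hemp_succ, -⟩ := hdyn
  induction b, hab using Nat.le_induction with
  | base => rfl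
  | succ b hab ih =>
    rw [hemp_succ i b ω, if_neg (hnot b hab b.lt_succ_self)]
    exact ih fun v hav hvb => hnot v hav (hvb.trans b.lt_succ_self)

lemma sqrt_inf'_gam_div_ntot_le (hdyn : T.Dynamics α ρ₀ ρ₁ r) {ts te t : ℕ} (hts : ts ≤ te)
    (ht : t ∈ Icc ts te) {i : Fin K} (hi : 0 < T.n i t ω) :
    √((Icc ts te).inf' (nonempty_Icc.mpr hts) (fun u => T.gam α u ω) / T.ntot te ω) ≤
      √(T.gam α t ω / T.n i t ω) := by
  have hinf : (Icc ts te).inf' (nonempty_Icc.mpr hts) (fun u => T.gam α u ω) ≤ T.gam α t ω :=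
    inf'_le _ ht
  have hcount : (T.n i t ω : ℝ) ≤ T.ntot te ω :=
    mod_cast (T.n_le_ntot i t ω).trans (hdyn.ntot_monotone (mem_Icc.mp ht).2)
  exact Real.sqrt_le_sqrt <| div_le_div₀ (T.gam_nonneg α t ω) hinf (mod_cast hi) hcount

lemma exists_emp_add_two_mul_le_of_rejected (hdyn : T.Dynamics α ρ₀ ρ₁ r) {t : ℕ}
    (hrej : T.acc t ω = false) {δ : ℝ}
    (hδ : ∀ i, 0 < T.n i t ω → δ ≤ √(T.gam α t ω / T.n i t ω)) :
    ∃ j ≠ T.arm t ω, T.emp (T.arm t ω) t ω + 2 * δ ≤ T.emp j t ω := by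
  obtain ⟨-, -, -, -, hrule⟩ := hdyn
  obtain ⟨j, hj, hnj, hna, hle⟩ := (hrule t ω).mp hrej
  unfold ucb lcb at hle
  exact ⟨j, hj, by linarith [hδ _ hna, hδ _ hnj]⟩

end Dynamics

structure IsRoundWith (T : Trace K Ω) (ω : Ω) (ts te : ℕ) (rt : Fin K → ℕ) : Prop where
  ts_le : ∀ i, ts ≤ rt i
  le_te : ∀ i, rt i ≤ te
  arm_eq : ∀ i, T.arm (rt i) ω = i
  rejected : ∀ i, T.acc (rt i) ω = false
  le_rt_arm : ∀ u, ts ≤ u → u ≤ te → u ≤ rt (T.arm u ω)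
  rt_lt_of_lt_arm : ∀ u, ts ≤ u → u ≤ te → ∀ j, j < T.arm u ω → rt j < u

lemma IsRound.exists_isRoundWith {ts te : ℕ} (h : T.IsRound ω ts te) :
    ∃ rt, T.IsRoundWith ω ts te rt := by
  obtain ⟨rt, -, hts, hte, -, hrej, -, hsched⟩ := h
  exact ⟨rt, ⟨hts, hte, fun i => (hrej i).1, fun i => (hrej i).2,
    fun u h₁ h₂ => (hsched u h₁ h₂).1, fun u h₁ h₂ => (hsched u h₁ h₂).2⟩⟩

namespace IsRoundWith

variable {ts te : ℕ} {rt : Fin K → ℕ}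

lemma rt_strictMono (h : T.IsRoundWith ω ts te rt) : StrictMono rt := fun j i hji =>
  h.rt_lt_of_lt_arm (rt i) (h.ts_le i) (h.le_te i) j (by rwa [h.arm_eq])

lemma emp_eq_emp_rt (hdyn : T.Dynamics α ρ₀ ρ₁ r) (h : T.IsRoundWith ω ts te rt) (i : Fin K)
    {u : ℕ} (hiu : rt i ≤ u) (hute : u ≤ te) : T.emp i u ω = T.emp i (rt i) ω := by
  refine hdyn.emp_eq_of_forall_not_accepted hiu fun v hiv hvu ⟨harm, hacc⟩ => ?_
  rcases hiv.eq_or_lt with rfl | hlt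
  · simp [h.rejected] at hacc
  · have := h.le_rt_arm v ((h.ts_le i).trans hlt.le) (hvu.le.trans hute)
    rw [harm] at this
    omega

lemma emp_rt_eq_emp_ts_of_lt (hdyn : T.Dynamics α ρ₀ ρ₁ r) (h : T.IsRoundWith ω ts te rt)
    {i j : Fin K} (hij : i < j) : T.emp j (rt i) ω = T.emp j ts ω := by
  refine hdyn.emp_eq_of_forall_not_accepted (h.ts_le i) fun v htv hvi ⟨harm, _⟩ => ?_
  have := h.rt_lt_of_lt_arm v htv (hvi.le.trans (h.le_te i)) i (harm ▸ hij)
  omega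

lemma emp_rt_add_two_mul_le_sup' [NeZero K] (hdyn : T.Dynamics α ρ₀ ρ₁ r)
    (h : T.IsRoundWith ω ts te rt) {δ : ℝ} (hδ₀ : 0 ≤ δ)
    (hδ : ∀ t ∈ Icc ts te, ∀ i, 0 < T.n i t ω → δ ≤ √(T.gam α t ω / T.n i t ω)) (i : Fin K) :
    T.emp i (rt i) ω + 2 * δ ≤ univ.sup' univ_nonempty fun j => T.emp j ts ω := by
  induction i using WellFoundedLT.induction with
  | _ i ih =>
    have hround : rt i ∈ Icc ts te := mem_Icc.mpr ⟨h.ts_le i, h.le_te i⟩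
    obtain ⟨j, hji, hgap⟩ :=
      hdyn.exists_emp_add_two_mul_le_of_rejected (h.rejected i) (hδ _ hround)
    rw [h.arm_eq] at hji hgap
    have hj : T.emp j (rt i) ω ≤ univ.sup' univ_nonempty fun j => T.emp j ts ω := by
      rcases hji.lt_or_gt with hlt | hgt
      · rw [h.emp_eq_emp_rt hdyn j (h.rt_strictMono hlt).le (h.le_te i)]
        linarith [ih j hlt]
      · rw [h.emp_rt_eq_emp_ts_of_lt hdyn hgt]
        exact le_sup' (fun j => T.emp j ts ω) (mem_univ j)
    linarith

end IsRoundWith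

end Trace

theorem round_decreases_max_empirical_mean_general
    (K : ℕ) [NeZero K] (α ρ₀ ρ₁ : ℝ)
    (r : Fin K → ℕ → Unit → ℝ) (T : Trace K Unit)
    (hdyn : T.Dynamics α ρ₀ ρ₁ r)
    (ts te : ℕ) (hts : ts ≤ te)
    (hround : T.IsRound () ts te) :
    (Finset.univ.sup' Finset.univ_nonempty fun i : Fin K => T.emp i te ()) ≤
      (Finset.univ.sup' Finset.univ_nonempty fun i : Fin K => T.emp i ts ()) -
        2 * Real.sqrt
          (((Finset.Icc ts te).inf' (Finset.nonempty_Icc.mpr hts) fun t => T.gam α t ()) /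
            (T.ntot te () : ℝ)) := by
  obtain ⟨rt, h⟩ := hround.exists_isRoundWith
  refine Finset.sup'_le _ _ fun i _ => ?_
  rw [h.emp_eq_emp_rt hdyn i (h.le_te i) le_rfl, le_sub_iff_add_le]
  exact h.emp_rt_add_two_mul_le_sup' hdyn (Real.sqrt_nonneg _)
    (fun _ ht _ hi => hdyn.sqrt_inf'_gam_div_ntot_le hts ht hi) i

/-- Lemma `lm:Er`: let `f(t) = max_i μ̂_{i,t}` be the highest
empirical mean maintained by the user.  For any round `[ts, te]` of Phase-1
Sweeping (a deterministic consequence of the decision rule, holding for every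
realization `r` of the rewards, here over the trivial sample space `Unit`),
`f(te) ≤ f(ts) − 2√(Γ̲/n(te))`, where `Γ̲ = min_{t ∈ [ts, te]} Γ(t)`. -/
theorem round_decreases_max_empirical_mean
    (K : ℕ) [NeZero K] (α ρ₀ ρ₁ : ℝ) (hα : 0 < α) (hρ₀ : 0 < ρ₀) (hρ : ρ₀ ≤ ρ₁)
    (r : Fin K → ℕ → Unit → ℝ) (T : Trace K Unit)
    (hdyn : T.Dynamics α ρ₀ ρ₁ r)
    (ts te : ℕ) (hts : ts ≤ te)
    (hround : T.IsRound () ts te)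
    (hcount : ∀ i : Fin K, 0 < T.n i ts ()) :
    (Finset.univ.sup' Finset.univ_nonempty fun i : Fin K => T.emp i te ()) ≤
      (Finset.univ.sup' Finset.univ_nonempty fun i : Fin K => T.emp i ts ()) -
        2 * Real.sqrt
          (((Finset.Icc ts te).inf' (Finset.nonempty_Icc.mpr hts) fun t => T.gam α t ()) /
            (T.ntot te () : ℝ)) :=
  round_decreases_max_empirical_mean_general K α ρ₀ ρ₁ r T hdyn ts te hts hround
end
end

section
/- Let K ≥ 2 and let μ = (μ₁,…,μ_K) ∈ ℝ^K satisfy μ₁ > μ₂ ≥ ⋯ ≥ μ_K, and set Δ₁ = μ₁ − μ₂. Let Alt(μ) be the set of vectors μ' ∈ ℝ^K having a unique maximal coordinate whose index differs from 1, and let Σ_K be the standard simplex of probability vectors ω ∈ ℝ_+^K with Σ_i ω_i = 1. Then sup_{ω ∈ Σ_K} inf_{μ' ∈ Alt(μ)} Σ_{i=1}^K ω_i · (μ_i − μ'_i)²/2 ≤ Δ₁²/2. -/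
/-- the Garivier–Kaufmann characteristic quantity is bounded:
`sup_{ω ∈ Σ_K} inf_{μ' ∈ Alt(μ)} Σ_i ω_i (μ_i − μ'_i)²/2 ≤ Δ₁²/2`, where `Σ_K` is
the probability simplex, `Alt(μ)` is the set of mean vectors with a unique maximal
coordinate whose index differs from that of the best arm (index `0` here), and
`Δ₁ = μ₁ − μ₂` (here `μ 0 - μ 1`). -/
theorem characteristic_quantity_le (K : ℕ) [NeZero K] (hK : 2 ≤ K)
    (μ : Fin K → ℝ)
    (hbest : ∀ i : Fin K, i ≠ 0 → μ i < μ 0)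
    (hmono : ∀ i j : Fin K, i ≤ j → μ j ≤ μ i) :
    (⨆ ω : {ω : Fin K → ℝ // (∀ i, 0 ≤ ω i) ∧ ∑ i, ω i = 1},
        ⨅ ν : {ν : Fin K → ℝ // ∃ j : Fin K, j ≠ 0 ∧ ∀ i, i ≠ j → ν i < ν j},
          ∑ i, ω.1 i * ((μ i - ν.1 i) ^ 2 / 2)) ≤
      (μ 0 - μ 1) ^ 2 / 2 := by
  have h1K : (1 : ℕ) < K := hK
  have hone : ((1 : Fin K) : ℕ) = 1 := by
    simp [Fin.val_one', Nat.mod_eq_of_lt h1K]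
  have h10 : (1 : Fin K) ≠ 0 := by
    intro h
    have := congrArg (Fin.val) h
    simp [hone] at this
    omega
  have hΔ : 0 < μ 0 - μ 1 := by
    have := hbest 1 h10
    linarith
  set Δ : ℝ := μ 0 - μ 1 with hΔdef
  -- the simplex is nonempty (uniform weights)
  haveI : Nonempty {ω : Fin K → ℝ // (∀ i, 0 ≤ ω i) ∧ ∑ i, ω i = 1} := by
    refine ⟨⟨fun _ => (K : ℝ)⁻¹, fun i => by positivity, ?_⟩⟩
    have hK0 : (K : ℝ) ≠ 0 := Nat.cast_ne_zero.mpr (NeZero.ne K)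
    simp [Finset.sum_const, mul_comm, hK0]
  apply ciSup_le
  intro ω
  apply le_of_forall_pos_le_add
  intro ε hε
  -- choose small δ
  set δ : ℝ := min 1 (ε / (2 * Δ + 1)) with hδdef
  have hδpos : 0 < δ := by
    apply lt_min one_pos
    positivity
  have hδ1 : δ ≤ 1 := min_le_left _ _
  have hδε : δ * (2 * Δ + 1) ≤ ε := by
    have h := min_le_right 1 (ε / (2 * Δ + 1))
    have h2 : (0:ℝ) < 2 * Δ + 1 := by linarith
    calc δ * (2 * Δ + 1) ≤ (ε / (2 * Δ + 1)) * (2 * Δ + 1) := by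
          apply mul_le_mul_of_nonneg_right h (le_of_lt h2)
      _ = ε := by field_simp
  -- the alternative instance
  set ν : Fin K → ℝ := fun i => if i = 0 then μ 1 - δ else if i = 1 then μ 1 else μ i - δ
    with hνdef
  have hν1 : ν 1 = μ 1 := by simp [hνdef, h10]
  have hνalt : ∃ j : Fin K, j ≠ 0 ∧ ∀ i, i ≠ j → ν i < ν j := by
    refine ⟨1, h10, fun i hi => ?_⟩
    rw [hν1]
    by_cases hi0 : i = 0
    · subst hi0; simp [hνdef]; linarith
    · have hle : μ i ≤ μ 1 := by
        apply hmono 1 i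
        have hiv : (i : ℕ) ≠ 0 := by
          intro h; exact hi0 (Fin.ext (by simp [h]))
        rw [Fin.le_def, hone]
        omega
      simp only [hνdef, if_neg hi0, if_neg hi]
      linarith
  clear_value ν δ Δ
  -- bounded below by 0
  have hbdd : BddBelow (Set.range fun ν : {ν : Fin K → ℝ //
      ∃ j : Fin K, j ≠ 0 ∧ ∀ i, i ≠ j → ν i < ν j} =>
      ∑ i, ω.1 i * ((μ i - ν.1 i) ^ 2 / 2)) := by
    refine ⟨0, ?_⟩
    rintro x ⟨ν', rfl⟩
    apply Finset.sum_nonneg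
    intro i _
    have := ω.2.1 i
    positivity
  have hkey : (⨅ ν : {ν : Fin K → ℝ // ∃ j : Fin K, j ≠ 0 ∧ ∀ i, i ≠ j → ν i < ν j},
      ∑ i, ω.1 i * ((μ i - ν.1 i) ^ 2 / 2)) ≤ (Δ + δ) ^ 2 / 2 := by
    refine le_trans (ciInf_le hbdd ⟨ν, hνalt⟩) ?_
    have hterm : ∀ i ∈ Finset.univ, ω.1 i * ((μ i - ν i) ^ 2 / 2)
        ≤ ω.1 i * ((Δ + δ) ^ 2 / 2) := by
      intro i _
      apply mul_le_mul_of_nonneg_left _ (ω.2.1 i)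
      suffices h : (μ i - ν i) ^ 2 ≤ (Δ + δ) ^ 2 by linarith
      by_cases hi0 : i = 0
      · subst hi0
        simp only [hνdef, if_pos rfl]
        have : μ 0 - (μ 1 - δ) = Δ + δ := by rw [hΔdef]; ring
        rw [this]
      · by_cases hi1 : i = 1
        · subst hi1
          rw [hν1]
          have : μ 1 - μ 1 = 0 := by ring
          rw [this]
          nlinarith [hΔ.le, hδpos.le]
        · simp only [hνdef, if_neg hi0, if_neg hi1]
          have : μ i - (μ i - δ) = δ := by ring
          rw [this]
          nlinarith
    calc ∑ i, ω.1 i * ((μ i - ν i) ^ 2 / 2)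
        ≤ ∑ i, ω.1 i * ((Δ + δ) ^ 2 / 2) := Finset.sum_le_sum hterm
      _ = (∑ i, ω.1 i) * ((Δ + δ) ^ 2 / 2) := by rw [Finset.sum_mul]
      _ = (Δ + δ) ^ 2 / 2 := by rw [ω.2.2, one_mul]
  refine hkey.trans ?_
  nlinarith [hδpos.le, hδ1, hδε, hΔ.le]
end
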